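/- arXiv:1705.07155 — 4 statements merged into one kernel-verified Lean document; each statement's English description precedes it below -/
import Mathlib

section
/- For every market G = (N, e), there exists a net-equivalent market G' = (N, e') (i.e., with the same net position for every node) whose total gross notional x' = Σ_{i,j} e'(i,j) equals (1/2) Σ_i |v_i|, where v_i are the net positions of G. Moreover, no net-equivalent market has total gross notional strictly smaller than (1/2) Σ_i |v_i|. -/
open Finset

noncomputable def net {N : Type*} [Fintype N] (e : N → N → ℝ) (i : N) : ℝ :=
  ∑ j, e i j - ∑ j, e j i

/-- there is a net-equivalent market with total gross notional
`(1/2) ∑ |vᵢ|`, and no net-equivalent market has strictly smaller total. -/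
theorem min_net_equivalent_notional {N : Type*} [Fintype N] (e : N → N → ℝ)
    (he : ∀ i j, 0 ≤ e i j) :
    (∃ e' : N → N → ℝ, (∀ i j, 0 ≤ e' i j) ∧ (∀ i, net e' i = net e i) ∧
        ∑ i, ∑ j, e' i j = (1 / 2) * ∑ i, |net e i|) ∧
    (∀ e'' : N → N → ℝ, (∀ i j, 0 ≤ e'' i j) → (∀ i, net e'' i = net e i) →
        (1 / 2) * ∑ i, |net e i| ≤ ∑ i, ∑ j, e'' i j) := by
  have hsum0 : ∑ i, net e i = 0 := by
    simp only [net, Finset.sum_sub_distrib]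
    rw [Finset.sum_comm]
    exact sub_self _
  constructor
  · set p : N → ℝ := fun i => max (net e i) 0 with hp
    set q : N → ℝ := fun i => max (-(net e i)) 0 with hq
    have hpnn : ∀ i, 0 ≤ p i := fun i => le_max_right _ _
    have hqnn : ∀ i, 0 ≤ q i := fun i => le_max_right _ _
    have hpq : ∀ i, p i - q i = net e i := fun i =>
      max_zero_sub_max_neg_zero_eq_self _
    have habs : ∀ i, p i + q i = |net e i| := fun i =>
      max_zero_add_max_neg_zero_eq_abs_self _
    set S : ℝ := ∑ i, p i with hS
    have hSq : ∑ i, q i = S := by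
      have : ∑ i, (p i - q i) = 0 := by
        simp only [hpq]; exact hsum0
      rw [Finset.sum_sub_distrib] at this
      linarith
    have hSabs : ∑ i, |net e i| = 2 * S := by
      calc ∑ i, |net e i| = ∑ i, (p i + q i) := by simp only [habs]
        _ = S + S := by rw [Finset.sum_add_distrib, hSq]
        _ = 2 * S := by ring
    rcases eq_or_lt_of_le (Finset.sum_nonneg fun i _ => hpnn i : (0:ℝ) ≤ S)
      with hS0 | hS0
    · -- S = 0, so all net positions are zero
      have hp0 : ∀ i, p i = 0 := by
        intro i
        have := (Finset.sum_eq_zero_iff_of_nonneg (fun i _ => hpnn i)).1 hS0.symm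
        exact this i (Finset.mem_univ i)
      have hq0 : ∀ i, q i = 0 := by
        have hq' : ∑ i, q i = 0 := by rw [hSq, hS, ← hS0]
        intro i
        exact (Finset.sum_eq_zero_iff_of_nonneg (fun i _ => hqnn i)).1 hq' i
          (Finset.mem_univ i)
      have hv0 : ∀ i, net e i = 0 := fun i => by
        rw [← hpq i, hp0 i, hq0 i]; ring
      refine ⟨fun _ _ => 0, fun _ _ => le_refl 0, fun i => ?_, ?_⟩
      · have h := hv0 i
        simp only [net] at h ⊢
        simp only [Finset.sum_const_zero]
        linarith
      · rw [hSabs]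
        simp only [Finset.sum_const_zero]
        linarith
    · -- S > 0
      refine ⟨fun i j => p i * q j / S, fun i j => by positivity, ?_, ?_⟩
      · intro i
        have h1 : ∑ j, p i * q j / S = p i := by
          rw [← Finset.sum_div, ← Finset.mul_sum, hSq,
            mul_div_assoc, div_self hS0.ne', mul_one]
        have hSne : S ≠ 0 := by rw [hS]; exact hS0.ne'
        have h2 : ∑ j, p j * q i / S = q i := by
          have hst : ∑ j, p j * q i / S = (∑ j, p j) * q i / S := by
            rw [Finset.sum_mul, Finset.sum_div]
          rw [hst, ← hS, mul_comm, mul_div_assoc, div_self hSne, mul_one]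
        rw [net, h1, h2, hpq]
      · have : ∀ i, ∑ j, p i * q j / S = p i := by
          intro i
          rw [← Finset.sum_div, ← Finset.mul_sum, hSq,
            mul_div_assoc, div_self hS0.ne', mul_one]
        simp only [this]
        rw [hSabs]; ring
  · intro e'' h0 hnet
    have key : ∀ i, |net e i| ≤ ∑ j, e'' i j + ∑ j, e'' j i := by
      intro i
      rw [← hnet i, net]
      calc |∑ j, e'' i j - ∑ j, e'' j i| ≤ |∑ j, e'' i j| + |∑ j, e'' j i| :=
            abs_sub _ _
        _ = ∑ j, e'' i j + ∑ j, e'' j i := by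
            rw [abs_of_nonneg (Finset.sum_nonneg fun j _ => h0 i j),
              abs_of_nonneg (Finset.sum_nonneg fun j _ => h0 j i)]
    have : ∑ i, |net e i| ≤ 2 * ∑ i, ∑ j, e'' i j := by
      calc ∑ i, |net e i| ≤ ∑ i, (∑ j, e'' i j + ∑ j, e'' j i) :=
            Finset.sum_le_sum fun i _ => key i
        _ = (∑ i, ∑ j, e'' i j) + (∑ i, ∑ j, e'' j i) := Finset.sum_add_distrib
        _ = 2 * ∑ i, ∑ j, e'' i j := by rw [Finset.sum_comm]; ring
    linarith
end

section
/- Let G' be obtained from a market G by the construction in the proof of Proposition 1: edges only from nodes with positive net position to nodes with negative net position, with row sums equal to the positive net positions and column sums equal to the absolute negative net positions. Then G' is net-equivalent to G, has zero excess, and contains no dealers (its underlying directed graph is bipartite). -/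
open Finset

/-- the bipartite construction of Proposition 1 is
net-equivalent to the original market, has zero excess and no dealers. -/
theorem bipartite_solution_properties {N : Type*} [Fintype N]
    (e e' : N → N → ℝ)
    (he : ∀ i j, 0 ≤ e i j) (he' : ∀ i j, 0 ≤ e' i j)
    (hsupp : ∀ i j, ¬(0 < net e i ∧ net e j < 0) → e' i j = 0)
    (hrow : ∀ i, 0 < net e i → ∑ j, e' i j = net e i)
    (hcol : ∀ j, net e j < 0 → ∑ i, e' i j = -(net e j)) :
    (∀ i, net e' i = net e i) ∧
    (∑ i, ∑ j, e' i j) - (1 / 2) * ∑ i, |net e' i| = 0 ∧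
    (∀ i, ¬(0 < ∑ j, e' i j ∧ 0 < ∑ j, e' j i)) := by
  have hrow0 : ∀ i, ¬ 0 < net e i → ∑ j, e' i j = 0 := fun i h =>
    Finset.sum_eq_zero fun j _ => hsupp i j (fun hc => h hc.1)
  have hcol0 : ∀ j, ¬ net e j < 0 → ∑ i, e' i j = 0 := fun j h =>
    Finset.sum_eq_zero fun i _ => hsupp i j (fun hc => h hc.2)
  have hnet : ∀ i, net e' i = net e i := by
    intro i
    show (∑ j, e' i j) - (∑ j, e' j i) = net e i
    rcases lt_trichotomy (net e i) 0 with h | h | h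
    · rw [hrow0 i (by linarith), hcol i h]; ring
    · rw [hrow0 i (by rw [h]; exact lt_irrefl 0), hcol0 i (by rw [h]; exact lt_irrefl 0)]
      linarith
    · rw [hrow i h, hcol0 i (by linarith)]; ring
  refine ⟨hnet, ?_, ?_⟩
  · have hsum0 : ∑ i, net e i = 0 := by
      unfold net
      rw [Finset.sum_sub_distrib, Finset.sum_comm]
      ring
    have hpos : ∑ i, ∑ j, e' i j = ∑ i, if 0 < net e i then net e i else 0 := by
      refine Finset.sum_congr rfl fun i _ => ?_
      split_ifs with h
      · exact hrow i h
      · exact hrow0 i h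
    have habs : ∀ i, |net e' i| =
        (if 0 < net e i then net e i else 0) + (if net e i < 0 then -(net e i) else 0) := by
      intro i; rw [hnet i]
      rcases lt_trichotomy (net e i) 0 with h | h | h
      · rw [abs_of_neg h]; split_ifs <;> linarith
      · simp [h]
      · rw [abs_of_pos h]; split_ifs <;> linarith
    have hnegsum : ∑ i, (if net e i < 0 then -(net e i) else 0)
        = ∑ i, (if 0 < net e i then net e i else 0) := by
      have key : ∑ i, ((if 0 < net e i then net e i else 0)
          - (if net e i < 0 then -(net e i) else 0)) = 0 := by
        rw [← hsum0]
        refine Finset.sum_congr rfl fun i _ => ?_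
        rcases lt_trichotomy (net e i) 0 with h | h | h <;> split_ifs <;> linarith
      rw [Finset.sum_sub_distrib] at key; linarith
    rw [hpos]
    simp only [habs]
    rw [Finset.sum_add_distrib, hnegsum]
    ring
  · rintro i ⟨h1, h2⟩
    by_cases hp : 0 < net e i
    · have hc := hcol0 i (by linarith)
      linarith
    · have hr := hrow0 i hp; linarith
end

section
/- Conservative compression of a directed closed chain: let K be a directed cycle on n ≥ 2 distinct nodes with edge weights e_1, …, e_n > 0 along the cycle, and let m = min_k e_k. Then the market K' obtained by subtracting m from every edge (so the minimal edges vanish) is net-equivalent to K, satisfies the conservative tolerances 0 ≤ e'_k ≤ e_k, and reduces the total gross notional by exactly n·m. Moreover no conservative net-equivalent modification of K achieves a total gross notional lower than Σ_k e_k − n·m. -/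
/-!
A conservative modification `f` of the cycle is dominated by it, so `f` is again a cycle with some
weights `v`. Equal net positions make `v - w` invariant under the shift `i ↦ i + 1`, and since `1`
generates `Fin n` the difference is a constant `c`. Nonnegativity on a minimal edge gives
`c ≥ -m`, so the gross notional `∑ w + n c` is at least `∑ w - n m`, with equality for `c = -m`.
-/

open Finset

variable {G R : Type*}

/-- The edge `i → i + s` carries weight `w i`; on `Fin n` with `s = 1` this is a directed closed
chain. -/
def cycleMatrix [Add G] [DecidableEq G] [Zero R] (s : G) (w : G → R) (i j : G) : R :=
  if j = i + s then w i else 0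

def netPosition [Fintype G] [AddCommGroup R] (f : G → G → R) (i : G) : R :=
  ∑ j, f i j - ∑ j, f j i

def grossNotional [Fintype G] [AddCommMonoid R] (f : G → G → R) : R :=
  ∑ i, ∑ j, f i j

lemma Function.Periodic.apply_eq_apply_zero_of_zmultiples_eq_top {α : Type*} [AddGroup G]
    {h : G → α} {s : G} (hh : Function.Periodic h s) (hs : AddSubgroup.zmultiples s = ⊤) (i : G) :
    h i = h 0 := by
  obtain ⟨k, rfl⟩ := AddSubgroup.mem_zmultiples_iff.mp (hs ▸ AddSubgroup.mem_top i)
  exact hh.zsmul_eq k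

lemma Fin.val_nsmul_mk_one {n : ℕ} [NeZero n] (h : 1 < n) (k : ℕ) :
    (k • (⟨1, h⟩ : Fin n)).val = k % n := by
  induction k with
  | zero => simp
  | succ k ih => rw [succ_nsmul, Fin.val_add, ih, Nat.mod_add_mod]

lemma Fin.zmultiples_mk_one_eq_top {n : ℕ} [NeZero n] (h : 1 < n) :
    AddSubgroup.zmultiples (⟨1, h⟩ : Fin n) = ⊤ := by
  refine (AddSubgroup.eq_top_iff' _).mpr fun i => ⟨i.val, Fin.ext ?_⟩
  simp only [natCast_zsmul, Fin.val_nsmul_mk_one, Nat.mod_eq_of_lt i.isLt]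

section Cycle

variable [AddGroup G] [DecidableEq G]

lemma eq_cycleMatrix_of_le [AddCommMonoid R] [PartialOrder R] {s : G} {w : G → R}
    {f : G → G → R} (hf : ∀ i j, 0 ≤ f i j ∧ f i j ≤ cycleMatrix s w i j) :
    f = cycleMatrix s (fun i => f i (i + s)) := by
  funext i j
  have := hf i j
  unfold cycleMatrix at this ⊢
  split_ifs at this ⊢ with h
  · rw [h]
  · exact le_antisymm this.2 this.1

variable [Fintype G]

@[simp]
lemma sum_cycleMatrix_row [AddCommMonoid R] (s : G) (w : G → R) (i : G) :
    ∑ j, cycleMatrix s w i j = w i := by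
  simp [cycleMatrix]

@[simp]
lemma sum_cycleMatrix_col [AddCommMonoid R] (s : G) (w : G → R) (i : G) :
    ∑ j, cycleMatrix s w j i = w (i - s) := by
  simp [cycleMatrix, eq_comm (a := i), ← eq_sub_iff_add_eq]

lemma netPosition_cycleMatrix [AddCommGroup R] (s : G) (w : G → R) (i : G) :
    netPosition (cycleMatrix s w) i = w i - w (i - s) := by
  simp [netPosition]

lemma grossNotional_cycleMatrix [AddCommMonoid R] (s : G) (w : G → R) :
    grossNotional (cycleMatrix s w) = ∑ i, w i := by
  simp [grossNotional]

lemma periodic_sub_of_netPosition_eq [AddCommGroup R] {s : G} {v w : G → R}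
    (h : ∀ i, netPosition (cycleMatrix s v) i = netPosition (cycleMatrix s w) i) :
    Function.Periodic (v - w) s := by
  intro i
  have := h (i + s)
  simp only [netPosition_cycleMatrix, add_sub_cancel_right] at this
  simp only [Pi.sub_apply]
  linear_combination (norm := abel) this

lemma exists_eq_cycleMatrix_add_const [AddCommGroup R] [PartialOrder R] {s : G}
    (hs : AddSubgroup.zmultiples s = ⊤) {w : G → R} {f : G → G → R}
    (hf : ∀ i j, 0 ≤ f i j ∧ f i j ≤ cycleMatrix s w i j)
    (hnet : ∀ i, netPosition f i = netPosition (cycleMatrix s w) i) :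
    ∃ c, f = cycleMatrix s (fun i => w i + c) := by
  set v := fun i => f i (i + s)
  have hfv : f = cycleMatrix s v := eq_cycleMatrix_of_le hf
  rw [hfv] at hnet
  have hconst :=
    (periodic_sub_of_netPosition_eq hnet).apply_eq_apply_zero_of_zmultiples_eq_top hs
  refine ⟨v 0 - w 0, hfv.trans (congrArg _ (funext fun i => ?_))⟩
  have := hconst i
  simp only [Pi.sub_apply] at this
  rw [← this, add_sub_cancel]

end Cycle

/-- conservatively compressing a directed closed chain by
subtracting the minimum edge weight from every edge is net-equivalent,
respects the conservative tolerances, reduces total notional by `n * m`,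
and no conservative net-equivalent modification does better. -/
theorem cycle_conservative_compression (n : ℕ) (hn : 2 ≤ n)
    (w : Fin n → ℝ) (hw : ∀ k, 0 < w k)
    (m : ℝ) (hm : IsLeast (Set.range w) m)
    (e e' : Fin n → Fin n → ℝ)
    (he : ∀ i j, e i j = if j = i + ⟨1, by omega⟩ then w i else 0)
    (he' : ∀ i j, e' i j = if j = i + ⟨1, by omega⟩ then w i - m else 0) :
    (∀ i, (∑ j, e' i j - ∑ j, e' j i) = (∑ j, e i j - ∑ j, e j i)) ∧
    (∀ i j, 0 ≤ e' i j ∧ e' i j ≤ e i j) ∧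
    (∑ i, ∑ j, e i j) - (∑ i, ∑ j, e' i j) = n * m ∧
    (∀ f : Fin n → Fin n → ℝ,
      (∀ i j, 0 ≤ f i j ∧ f i j ≤ e i j) →
      (∀ i, (∑ j, f i j - ∑ j, f j i) = (∑ j, e i j - ∑ j, e j i)) →
      (∑ i, ∑ j, e i j) - n * m ≤ ∑ i, ∑ j, f i j) := by
  have : NeZero n := ⟨by omega⟩
  set s : Fin n := ⟨1, by omega⟩
  obtain ⟨⟨k, rfl⟩, hmin⟩ := hm
  obtain rfl : e = cycleMatrix s w := funext₂ he
  obtain rfl : e' = cycleMatrix s (fun i => w i - w k) := funext₂ he'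
  refine ⟨fun i => ?_, fun i j => ?_, ?_, fun f hf hnet => ?_⟩
  · change netPosition _ i = netPosition _ i
    simp only [netPosition_cycleMatrix]
    ring
  · unfold cycleMatrix
    split_ifs
    · exact ⟨sub_nonneg.mpr (hmin ⟨i, rfl⟩), sub_le_self _ (hw k).le⟩
    · exact ⟨le_rfl, le_rfl⟩
  · change grossNotional _ - grossNotional _ = _
    simp [grossNotional_cycleMatrix, sum_sub_distrib]
  · obtain ⟨c, rfl⟩ :=
      exists_eq_cycleMatrix_add_const (Fin.zmultiples_mk_one_eq_top (by omega)) hf hnet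
    have hc := (hf k (k + s)).1
    rw [cycleMatrix, if_pos rfl] at hc
    change grossNotional _ - _ ≤ grossNotional _
    simp only [grossNotional_cycleMatrix, sum_add_distrib, sum_const, card_univ, Fintype.card_fin,
      nsmul_eq_mul]
    linarith [mul_nonneg n.cast_nonneg hc]
end

section
/- If a market contains no directed cycle (its weighted directed graph restricted to positive-weight edges is acyclic), then the only conservative net-equivalent modification is the identity; in particular, no conservative compression can strictly reduce the total gross notional. -/
open Finset

/-- A directed cycle (closed walk with at least one edge) in the graph of
strictly positive entries of `d`. -/
def HasCycle {N : Type*} (d : N → N → ℝ) : Prop :=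
  ∃ (k : ℕ) (c : ℕ → N), 1 ≤ k ∧ c k = c 0 ∧ ∀ m < k, 0 < d (c m) (c (m + 1))

/-- in an acyclic market, the only conservative net-equivalent
modification is the identity. -/
theorem acyclic_no_conservative_compression {N : Type*} [Fintype N]
    (e : N → N → ℝ) (he : ∀ i j, 0 ≤ e i j)
    (hacyclic : ¬ HasCycle e) :
    ∀ e' : N → N → ℝ,
      (∀ i j, 0 ≤ e' i j ∧ e' i j ≤ e i j) →
      (∀ i, (∑ j, e' i j - ∑ j, e' j i) = (∑ j, e i j - ∑ j, e j i)) →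
      e' = e := by
  classical
  intro e' hle hnet
  by_contra hne
  set d : N → N → ℝ := fun i j => e i j - e' i j with hd
  have hd0 : ∀ i j, 0 ≤ d i j := fun i j => by
    have := (hle i j).2; simp only [hd]; linarith
  have hde : ∀ i j, 0 < d i j → 0 < e i j := fun i j h => by
    have := (hle i j).1; simp only [hd] at h; linarith
  have hdiv : ∀ i, ∑ j, d i j = ∑ j, d j i := by
    intro i
    have := hnet i
    simp only [hd, Finset.sum_sub_distrib]
    linarith
  have hex : ∃ i j, 0 < d i j := by
    by_contra h
    push_neg at h
    apply hne
    funext i j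
    have h1 := h i j; have h2 := hd0 i j
    simp only [hd] at h1 h2; linarith
  obtain ⟨i0, j0, hij0⟩ := hex
  have hio : ∀ i : N, (∃ j, 0 < d j i) → ∃ j, 0 < d i j := by
    rintro i ⟨j, hj⟩
    by_contra h
    push_neg at h
    have h1 : ∑ k, d i k = 0 :=
      Finset.sum_eq_zero (fun k _ => le_antisymm (h k) (hd0 i k))
    have h2 : 0 < ∑ k, d k i :=
      lt_of_lt_of_le hj (Finset.single_le_sum (fun k _ => hd0 k i) (Finset.mem_univ j))
    rw [hdiv i] at h1; linarith
  let f : N → N := fun i => if h : ∃ j, 0 < d i j then h.choose else i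
  have hf : ∀ i, (∃ j, 0 < d i j) → 0 < d i (f i) := by
    intro i h; simp only [f, dif_pos h]; exact h.choose_spec
  let c : ℕ → N := fun n => f^[n] i0
  have hc : ∀ n, 0 < d (c n) (c (n + 1)) := by
    intro n
    induction n with
    | zero => simpa [c] using hf i0 ⟨j0, hij0⟩
    | succ n ih =>
      have := hf (c (n + 1)) (hio _ ⟨c n, ih⟩)
      simpa [c, Function.iterate_succ_apply'] using this
  obtain ⟨a, b, hab, hcab⟩ := Finite.exists_ne_map_eq_of_infinite c
  rcases hab.lt_or_gt with h | h
  · exact hacyclic ⟨b - a, fun n => c (a + n), by omega, by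
      simp only [Nat.add_zero]
      rw [show a + (b - a) = b by omega, hcab], fun m hm => hde _ _ (hc (a + m))⟩
  · exact hacyclic ⟨a - b, fun n => c (b + n), by omega, by
      simp only [Nat.add_zero]
      rw [show b + (a - b) = a by omega, ← hcab], fun m hm => hde _ _ (hc (b + m))⟩
end
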